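/- The group Γ is not solvable: the derived series Γ ⊇ Γ′ ⊇ Γ″ ⊇ ⋯ never reaches the trivial group. -/

import Mathlib

namespace PinkGroup

mutual
  /-- forward action of the generator `a` -/
  def aF : List Bool → List Bool
    | [] => []
    | false :: w => true :: bF w
    | true :: w => false :: w
  /-- forward action of the generator `b` -/
  def bF : List Bool → List Bool
    | [] => []
    | false :: w => false :: aF w
    | true :: w => true :: w
end

mutual
  /-- inverse of `aF` -/
  def aIF : List Bool → List Bool
    | [] => []
    | true :: w => false :: bIF w
    | false :: w => true :: w
  /-- inverse of `bF` -/
  def bIF : List Bool → List Bool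
    | [] => []
    | false :: w => false :: aIF w
    | true :: w => true :: w
end

lemma inv_all (w : List Bool) :
    aF (aIF w) = w ∧ bF (bIF w) = w ∧ aIF (aF w) = w ∧ bIF (bF w) = w := by
  induction w with
  | nil => simp [aF, bF, aIF, bIF]
  | cons x w ih =>
    cases x <;>
      simp [aF, bF, aIF, bIF, ih.1, ih.2.1, ih.2.2.1, ih.2.2.2]

/-- The generator `a` of Pink's group: `(1w)^a = 2 w^b`, `(2w)^a = 1w`
(where the letter `1` is `false` and the letter `2` is `true`). -/
def a : Equiv.Perm (List Bool) :=
  ⟨aF, aIF, fun w => (inv_all w).2.2.1, fun w => (inv_all w).1⟩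

/-- The generator `b` of Pink's group: `(1w)^b = 1 w^a`, `(2w)^b = 2w`. -/
def b : Equiv.Perm (List Bool) :=
  ⟨bF, bIF, fun w => (inv_all w).2.2.2, fun w => (inv_all w).2.1⟩

/-- Pink's group `Γ`, the iterated monodromy group of `z^2 - 1`. -/
def Gam : Subgroup (Equiv.Perm (List Bool)) := Subgroup.closure {a, b}

lemma a_mem : a ∈ Gam := Subgroup.subset_closure (by simp)

lemma b_mem : b ∈ Gam := Subgroup.subset_closure (by simp)

/-! ### Auxiliary development -/

abbrev P := Equiv.Perm (List Bool)

@[simp] lemma a_apply (w : List Bool) : a w = aF w := rfl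
@[simp] lemma a_inv_apply (w : List Bool) : a⁻¹ w = aIF w := rfl
@[simp] lemma b_apply (w : List Bool) : b w = bF w := rfl
@[simp] lemma b_inv_apply (w : List Bool) : b⁻¹ w = bIF w := rfl
@[simp] lemma aF_aIF (w : List Bool) : aF (aIF w) = w := (inv_all w).1
@[simp] lemma bF_bIF (w : List Bool) : bF (bIF w) = w := (inv_all w).2.1
@[simp] lemma aIF_aF (w : List Bool) : aIF (aF w) = w := (inv_all w).2.2.1
@[simp] lemma bIF_bF (w : List Bool) : bIF (bF w) = w := (inv_all w).2.2.2

/-- the function underlying the operator `g ↦ (g, 1)`. -/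
def EsemFun (g : List Bool → List Bool) : List Bool → List Bool
  | [] => []
  | false :: w => false :: g w
  | true :: w => true :: w

/-- The operator `g ↦ (g, 1)` : act by `g` on the left subtree. -/
def Esem (g : P) : P where
  toFun := EsemFun g
  invFun := EsemFun g.symm
  left_inv := by
    intro w
    cases w with
    | nil => rfl
    | cons x w => cases x <;> simp [EsemFun]
  right_inv := by
    intro w
    cases w with
    | nil => rfl
    | cons x w => cases x <;> simp [EsemFun]

@[simp] lemma Esem_nil (g : P) : Esem g [] = [] := rfl
@[simp] lemma Esem_false (g : P) (w : List Bool) : Esem g (false :: w) = false :: g w := rfl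
@[simp] lemma Esem_true (g : P) (w : List Bool) : Esem g (true :: w) = true :: w := rfl

lemma Esem_one : Esem 1 = 1 := by
  ext w
  cases w with
  | nil => rfl
  | cons x w => cases x <;> simp

lemma Esem_mul (g h : P) : Esem (g * h) = Esem g * Esem h := by
  ext w
  cases w with
  | nil => rfl
  | cons x w => cases x <;> simp [Equiv.Perm.mul_apply]

lemma Esem_inv (g : P) : Esem g⁻¹ = (Esem g)⁻¹ := by
  have h : Esem g * Esem g⁻¹ = 1 := by rw [← Esem_mul, mul_inv_cancel, Esem_one]
  exact eq_inv_of_mul_eq_one_right h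

/-- The operator `g ↦ (1, g)` : act by `g` on the right subtree. -/
def Fsem (g : P) : P := a⁻¹ * Esem g * a

@[simp] lemma Fsem_nil (g : P) : Fsem g [] = [] := rfl

@[simp] lemma Fsem_true (g : P) (w : List Bool) : Fsem g (true :: w) = true :: g w := by
  simp [Fsem, Equiv.Perm.mul_apply, aF, aIF]

@[simp] lemma Fsem_false (g : P) (w : List Bool) : Fsem g (false :: w) = false :: w := by
  simp [Fsem, Equiv.Perm.mul_apply, aF, aIF]

/-- the key self-similarity conjugation identities -/
lemma conj_a (x : P) : Esem (a * x * a⁻¹) = b * Esem x * b⁻¹ := by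
  ext w
  cases w with
  | nil => rfl
  | cons c w => cases c <;> simp [Equiv.Perm.mul_apply, aF, bF, aIF, bIF]

lemma conj_b (x : P) : Esem (b * x * b⁻¹) = a * a * Esem x * a⁻¹ * a⁻¹ := by
  ext w
  cases w with
  | nil => rfl
  | cons c w => cases c <;> simp [Equiv.Perm.mul_apply, aF, bF, aIF, bIF]

/-- seed commutator -/
def z : P := b * a * b⁻¹ * a⁻¹

lemma z_mem : z ∈ Gam := by
  rw [z]
  exact mul_mem (mul_mem (mul_mem b_mem a_mem) (inv_mem b_mem)) (inv_mem a_mem)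

lemma Esem_z : Esem z = a * a * b * a⁻¹ * a⁻¹ * b⁻¹ := by
  ext w
  cases w with
  | nil => rfl
  | cons c w => cases c <;> simp [z, Equiv.Perm.mul_apply, aF, bF, aIF, bIF]

/-- `N` : essentially the normal closure of `z` inside `Γ`. -/
def N : Subgroup P := Subgroup.closure {g : P | ∃ h ∈ Gam, g = h * z * h⁻¹}

lemma zN : z ∈ N := Subgroup.subset_closure ⟨1, one_mem _, by group⟩

lemma N_le_Gam : N ≤ Gam := by
  rw [N, Subgroup.closure_le]
  rintro g ⟨h, hh, rfl⟩
  exact mul_mem (mul_mem hh z_mem) (inv_mem hh)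

lemma conjN {k : P} (hk : k ∈ Gam) : ∀ {x : P}, x ∈ N → k * x * k⁻¹ ∈ N := by
  intro x hx
  induction hx using Subgroup.closure_induction with
  | mem g hg =>
      obtain ⟨h, hh, rfl⟩ := hg
      have : k * (h * z * h⁻¹) * k⁻¹ = (k * h) * z * (k * h)⁻¹ := by group
      rw [this]
      exact Subgroup.subset_closure ⟨k * h, mul_mem hk hh, rfl⟩
  | one => simpa using one_mem N
  | mul x y hx hy ihx ihy =>
      have : k * (x * y) * k⁻¹ = (k * x * k⁻¹) * (k * y * k⁻¹) := by group
      rw [this]; exact mul_mem ihx ihy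
  | inv x hx ihx =>
      have : k * x⁻¹ * k⁻¹ = (k * x * k⁻¹)⁻¹ := by group
      rw [this]; exact inv_mem ihx

lemma Econj {k : P} (hk : k ∈ Gam) :
    ∃ k' ∈ Gam, ∀ x : P, Esem (k * x * k⁻¹) = k' * Esem x * k'⁻¹ := by
  induction hk using Subgroup.closure_induction with
  | mem g hg =>
      rcases hg with hg | hg
      · exact ⟨b, b_mem, by rw [hg]; exact conj_a⟩
      · simp only [Set.mem_singleton_iff] at hg
        refine ⟨a * a, mul_mem a_mem a_mem, ?_⟩
        intro x
        rw [hg, conj_b]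
        group
  | one => exact ⟨1, one_mem _, fun x => by group⟩
  | mul k l _ _ ihk ihl =>
      obtain ⟨k', hk', hkid⟩ := ihk
      obtain ⟨l', hl', hlid⟩ := ihl
      refine ⟨k' * l', mul_mem hk' hl', fun x => ?_⟩
      have h1 : k * l * x * (k * l)⁻¹ = k * (l * x * l⁻¹) * k⁻¹ := by group
      rw [h1, hkid, hlid]
      group
  | inv k _ ihk =>
      obtain ⟨k', hk', hkid⟩ := ihk
      refine ⟨k'⁻¹, inv_mem hk', fun x => ?_⟩
      have h1 := hkid (k⁻¹ * x * k)
      have h2 : k * (k⁻¹ * x * k) * k⁻¹ = x := by group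
      rw [h2] at h1
      simp only [inv_inv]
      rw [h1]
      group

lemma Esem_z_mem : Esem z ∈ N := by
  have h : a * a * b * a⁻¹ * a⁻¹ * b⁻¹ = (a * z⁻¹ * a⁻¹) * z⁻¹ := by
    rw [z]; group
  rw [Esem_z, h]
  exact mul_mem (conjN a_mem (inv_mem zN)) (inv_mem zN)

lemma Esem_N {x : P} (hx : x ∈ N) : Esem x ∈ N := by
  induction hx using Subgroup.closure_induction with
  | mem g hg =>
      obtain ⟨h, hh, rfl⟩ := hg
      obtain ⟨h', hh', hid⟩ := Econj hh
      rw [hid z]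
      exact conjN hh' Esem_z_mem
  | one => rw [Esem_one]; exact one_mem _
  | mul x y _ _ ihx ihy => rw [Esem_mul]; exact mul_mem ihx ihy
  | inv x _ ihx => rw [Esem_inv]; exact inv_mem ihx

lemma Fsem_N {x : P} (hx : x ∈ N) : Fsem x ∈ N :=
  conjN (inv_mem a_mem) (Esem_N hx)

/-! ### Tree automorphisms -/

lemma len_aF_bF : ∀ w : List Bool, (aF w).length = w.length ∧ (bF w).length = w.length := by
  intro w
  induction w with
  | nil => simp [aF, bF]
  | cons x w ih => cases x <;> simp [aF, bF, ih.1, ih.2]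

lemma append_aF_bF : ∀ u t : List Bool,
    (∃ s, aF (u ++ t) = aF u ++ s) ∧ (∃ s, bF (u ++ t) = bF u ++ s) := by
  intro u
  induction u with
  | nil => intro t; exact ⟨⟨aF t, rfl⟩, ⟨bF t, rfl⟩⟩
  | cons x u ih =>
      intro t
      cases x
      · obtain ⟨⟨s1, hs1⟩, ⟨s2, hs2⟩⟩ := ih t
        exact ⟨⟨s2, by simp [aF, hs2]⟩, ⟨s1, by simp [bF, hs1]⟩⟩
      · exact ⟨⟨t, by simp [aF]⟩, ⟨t, by simp [bF]⟩⟩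

/-- prefix-uniqueness -/
lemma prefix_unique {p q w : List Bool} (h1 : p <+: w) (h2 : q <+: w)
    (h : p.length = q.length) : p = q := by
  rw [List.prefix_iff_eq_take.mp h1, List.prefix_iff_eq_take.mp h2, h]

/-- tree automorphisms: length preserving, prefix preserving bijections -/
def TAsub : Subgroup P where
  carrier := {g : P | (∀ w, (g w).length = w.length) ∧ ∀ u w, u <+: w → g u <+: g w}
  one_mem' := ⟨fun w => rfl, fun u w h => h⟩
  mul_mem' := by
    rintro x y ⟨hx1, hx2⟩ ⟨hy1, hy2⟩
    refine ⟨fun w => ?_, fun u w h => ?_⟩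
    · rw [Equiv.Perm.mul_apply, hx1, hy1]
    · rw [Equiv.Perm.mul_apply, Equiv.Perm.mul_apply]
      exact hx2 _ _ (hy2 _ _ h)
  inv_mem' := by
    rintro x ⟨hx1, hx2⟩
    have hlen : ∀ w, (x⁻¹ w).length = w.length := by
      intro w
      have := hx1 (x⁻¹ w)
      rw [Equiv.Perm.coe_inv, Equiv.apply_symm_apply] at this
      exact this.symm
    refine ⟨hlen, fun u w h => ?_⟩
    set q := (x⁻¹ w).take u.length with hq
    have hq1 : q <+: x⁻¹ w := List.take_prefix _ _
    have hq2 : x q <+: w := by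
      have := hx2 _ _ hq1
      rwa [Equiv.Perm.coe_inv, Equiv.apply_symm_apply] at this
    have hqlen : (x q).length = u.length := by
      rw [hx1 q, hq, List.length_take, hlen w]
      exact min_eq_left h.length_le
    have hxq : x q = u := prefix_unique hq2 h hqlen
    have : q = x⁻¹ u := by rw [← hxq, Equiv.Perm.coe_inv, Equiv.symm_apply_apply]
    rwa [this] at hq1

lemma a_TA : a ∈ TAsub := by
  constructor
  · exact fun w => (len_aF_bF w).1
  · rintro u w ⟨t, rfl⟩
    obtain ⟨s, hs⟩ := (append_aF_bF u t).1
    exact ⟨s, by simp [hs]⟩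

lemma b_TA : b ∈ TAsub := by
  constructor
  · exact fun w => (len_aF_bF w).2
  · rintro u w ⟨t, rfl⟩
    obtain ⟨s, hs⟩ := (append_aF_bF u t).2
    exact ⟨s, by simp [hs]⟩

lemma Gam_le_TA : Gam ≤ TAsub := by
  rw [Gam, Subgroup.closure_le]
  rintro g (hg | hg)
  · rw [hg]; exact a_TA
  · simp only [Set.mem_singleton_iff] at hg
    rw [hg]; exact b_TA

/-! ### Support and richness -/

/-- `g` is supported on the subtree below `v`. -/
def Supp (g : P) (v : List Bool) : Prop := ∀ w, ¬ v <+: w → g w = w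

def Rich (H : Subgroup P) : Prop :=
  ∀ v : List Bool, ∃ g : P, g ∈ H ∧ g ∈ TAsub ∧ g ≠ 1 ∧ Supp g v

lemma exists_moved {g : P} (h : g ≠ 1) : ∃ w, g w ≠ w := by
  by_contra hc
  push_neg at hc
  exact h (Equiv.ext fun w => by rw [hc w]; rfl)

lemma supp_inv {g : P} {v : List Bool} (h : Supp g v) : Supp g⁻¹ v := by
  intro w hw
  have := h w hw
  conv_lhs => rw [← this]
  rw [Equiv.Perm.coe_inv, Equiv.symm_apply_apply]

open scoped commutatorElement

/-- richness passes to commutator subgroups -/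
lemma rich_commutator {H : Subgroup P} (h : Rich H) : Rich ⁅H, H⁆ := by
  intro v
  obtain ⟨x, hxH, hxTA, hx1, hxS⟩ := h v
  obtain ⟨m, hm⟩ := exists_moved hx1
  have hvm : v <+: m := by
    by_contra hc
    exact hm (hxS m hc)
  have hxv : x v = v := by
    by_contra hc
    have h1 : ¬ v <+: x v := by
      intro hp
      exact hc (hp.eq_of_length (by rw [hxTA.1 v])).symm
    have h2 := hxS (x v) h1
    exact hc (x.injective h2)
  have hvxm : v <+: x m := by
    have := hxTA.2 v m hvm
    rwa [hxv] at this
  have hlen : (x m).length = m.length := hxTA.1 m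
  have hdis : ∀ p, m <+: p → ¬ x m <+: p := by
    intro p h1 h2
    have h3 : m <+: x m := List.prefix_of_prefix_length_le h1 h2 (by rw [hlen])
    exact hm (h3.eq_of_length hlen.symm).symm
  obtain ⟨y, hyH, hyTA, hy1, hyS⟩ := h m
  have hySinv : Supp y⁻¹ m := supp_inv hyS
  have hxinv_fix : ∀ p, ¬ x m <+: p → ¬ m <+: x⁻¹ p := by
    intro p hp hc
    have := hxTA.2 m (x⁻¹ p) hc
    rw [Equiv.Perm.coe_inv, Equiv.apply_symm_apply] at this
    exact hp this
  refine ⟨⁅x, y⁆, Subgroup.commutator_mem_commutator hxH hyH, ?_, ?_, ?_⟩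
  · rw [commutatorElement_def]
    exact mul_mem (mul_mem (mul_mem hxTA hyTA) (inv_mem hxTA)) (inv_mem hyTA)
  · -- nontrivial
    obtain ⟨p, hp⟩ := exists_moved hy1
    have hmp : m <+: p := by
      by_contra hc
      exact hp (hyS p hc)
    have hxmp : ¬ x m <+: p := hdis p hmp
    have hkey : ⁅x, y⁆ (y p) = p := by
      rw [commutatorElement_def]
      simp only [Equiv.Perm.mul_apply]
      rw [Equiv.Perm.coe_inv y, Equiv.symm_apply_apply]
      rw [hyS _ (hxinv_fix p hxmp), Equiv.Perm.coe_inv x, Equiv.apply_symm_apply]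
    intro hc
    rw [hc] at hkey
    simp only [Equiv.Perm.one_apply] at hkey
    exact hp hkey
  · -- support
    intro w hw
    have h1 : ¬ m <+: w := fun hc => hw (hvm.trans hc)
    have h2 : ¬ x m <+: w := fun hc => hw (hvxm.trans hc)
    rw [commutatorElement_def]
    simp only [Equiv.Perm.mul_apply]
    rw [hySinv w h1, hyS _ (hxinv_fix w h2), Equiv.Perm.coe_inv, Equiv.apply_symm_apply]

/-! ### Richness of Γ -/

/-- recursive witnesses -/
def wv : List Bool → P
  | [] => z
  | false :: v => Esem (wv v)
  | true :: v => Fsem (wv v)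

lemma wv_mem (v : List Bool) : wv v ∈ N := by
  induction v with
  | nil => exact zN
  | cons x v ih => cases x <;> simp only [wv] <;> [exact Esem_N ih; exact Fsem_N ih]

lemma z_moves : z [true, false] = [true, true] := by
  simp [z, Equiv.Perm.mul_apply, aF, bF, aIF, bIF]

lemma Esem_ne_one {g : P} (h : g ≠ 1) : Esem g ≠ 1 := by
  obtain ⟨w, hw⟩ := exists_moved h
  intro hc
  have : Esem g (false :: w) = (1 : P) (false :: w) := by rw [hc]
  simp only [Esem_false, Equiv.Perm.one_apply] at this
  exact hw (by injection this)

lemma Fsem_ne_one {g : P} (h : g ≠ 1) : Fsem g ≠ 1 := by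
  intro hc
  have : Esem g = 1 := by
    have : Esem g = a * Fsem g * a⁻¹ := by rw [Fsem]; group
    rw [this, hc]; group
  exact Esem_ne_one h this

lemma wv_ne_one (v : List Bool) : wv v ≠ 1 := by
  induction v with
  | nil =>
      intro hc
      have h2 := z_moves
      rw [show z = wv [] from rfl, hc] at h2
      simp at h2
  | cons x v ih => cases x <;> simp only [wv] <;> [exact Esem_ne_one ih; exact Fsem_ne_one ih]

lemma supp_Esem {g : P} {v : List Bool} (h : Supp g v) : Supp (Esem g) (false :: v) := by
  intro w hw
  cases w with
  | nil => rfl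
  | cons c w =>
      cases c
      · have : ¬ v <+: w := fun hc => hw (List.cons_prefix_cons.mpr ⟨rfl, hc⟩)
        simp [h w this]
      · simp

lemma supp_Fsem {g : P} {v : List Bool} (h : Supp g v) : Supp (Fsem g) (true :: v) := by
  intro w hw
  cases w with
  | nil => rfl
  | cons c w =>
      cases c
      · simp
      · have : ¬ v <+: w := fun hc => hw (List.cons_prefix_cons.mpr ⟨rfl, hc⟩)
        simp [h w this]

lemma wv_supp (v : List Bool) : Supp (wv v) v := by
  induction v with
  | nil => exact fun w hw => absurd (List.nil_prefix) hw
  | cons x v ih => cases x <;> simp only [wv] <;> [exact supp_Esem ih; exact supp_Fsem ih]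

lemma rich_Gam : Rich Gam := by
  intro v
  exact ⟨wv v, N_le_Gam (wv_mem v), Gam_le_TA (N_le_Gam (wv_mem v)), wv_ne_one v, wv_supp v⟩

/-- The group `Γ` is not solvable: its derived series never reaches
the trivial group. -/
theorem Gam_not_solvable : ¬ IsSolvable ↥Gam := by
  intro h
  obtain ⟨n, hn⟩ := (isSolvable_def _).mp h
  have key : ∀ k, Rich ((derivedSeries ↥Gam k).map Gam.subtype) := by
    intro k
    induction k with
    | zero =>
        have : (derivedSeries ↥Gam 0).map Gam.subtype = Gam := by
          rw [derivedSeries_zero, ← MonoidHom.range_eq_map, Subgroup.range_subtype]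
        rw [this]
        exact rich_Gam
    | succ k ih =>
        rw [derivedSeries_succ, Subgroup.map_commutator]
        exact rich_commutator ih
  obtain ⟨g, hg, _, hne, _⟩ := key n []
  rw [hn, Subgroup.map_bot] at hg
  exact hne (Subgroup.mem_bot.mp hg)

end PinkGroup
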